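/- arXiv:0910.1407 — 2 statements merged into one kernel-verified Lean document; each statement's English description precedes it below -/
import Mathlib

section
/- Let (U_i, X_i, Y_i, Z_i) for i = 1..n arise from n uses of a memoryless channel where Y is less noisy than Z, with U_i = (M_0, Z^{i-1}). Then ∑_{i=1}^n [I(M_1; Y_i | M_0, Y_{i+1}^n) - I(M_1; Z_i | M_0, Z^{i-1})] ≤ ∑_{i=1}^n [I(X_i; Y_i | U_i) - I(X_i; Z_i | U_i)]. -/
open scoped BigOperators Classical

namespace Secrecy

/-- `-x log₂ x`, with the convention `0 log 0 = 0`. -/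
noncomputable def nml (x : ℝ) : ℝ := - x * Real.logb 2 x

variable {Ω : Type} [Fintype Ω]

/-- Probability of an event under a pmf on a finite sample space. -/
noncomputable def pr (p : Ω → ℝ) (s : Ω → Prop) : ℝ := ∑ ω, if s ω then p ω else 0

/-- `p` is a probability mass function. -/
def IsPMF (p : Ω → ℝ) : Prop := (∀ ω, 0 ≤ p ω) ∧ ∑ ω, p ω = 1

/-- Shannon entropy (base 2) of a finitely valued random variable. -/
noncomputable def H {A : Type} [Fintype A] (p : Ω → ℝ) (X : Ω → A) : ℝ :=
  ∑ a, nml (pr p (fun ω => X ω = a))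

/-- Conditional entropy `H(X|Y) = H(X,Y) - H(Y)`. -/
noncomputable def Hc {A B : Type} [Fintype A] [Fintype B] (p : Ω → ℝ)
    (X : Ω → A) (Y : Ω → B) : ℝ :=
  H p (fun ω => (X ω, Y ω)) - H p Y

/-- Mutual information `I(X;Y)`. -/
noncomputable def MI {A B : Type} [Fintype A] [Fintype B] (p : Ω → ℝ)
    (X : Ω → A) (Y : Ω → B) : ℝ :=
  H p X + H p Y - H p (fun ω => (X ω, Y ω))

/-- Conditional mutual information `I(X;Y|Z)`. -/
noncomputable def CMI {A B C : Type} [Fintype A] [Fintype B] [Fintype C]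
    (p : Ω → ℝ) (X : Ω → A) (Y : Ω → B) (Z : Ω → C) : ℝ :=
  H p (fun ω => (X ω, Z ω)) + H p (fun ω => (Y ω, Z ω))
    - H p (fun ω => (X ω, Y ω, Z ω)) - H p Z

/-- Markov chain `X → Y → Z` : `X` and `Z` are conditionally independent given `Y`. -/
def Markov {A B C : Type} (p : Ω → ℝ) (X : Ω → A) (Y : Ω → B) (Z : Ω → C) : Prop :=
  ∀ a b c,
    pr p (fun ω => X ω = a ∧ Y ω = b ∧ Z ω = c) * pr p (fun ω => Y ω = b) =
    pr p (fun ω => X ω = a ∧ Y ω = b) * pr p (fun ω => Y ω = b ∧ Z ω = c)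

/-- The past `Y^{i-1}` of a random sequence, as a finitely valued random variable. -/
noncomputable def past {n : ℕ} {A : Type} (Y : Ω → Fin n → A) (i : Fin n) :
    Ω → (Fin n → Option A) :=
  fun ω j => if j < i then some (Y ω j) else none

/-- The future `Z_{i+1}^n` of a random sequence, as a finitely valued random variable. -/
noncomputable def future {n : ℕ} {A : Type} (Z : Ω → Fin n → A) (i : Fin n) :
    Ω → (Fin n → Option A) :=
  fun ω j => if i < j then some (Z ω j) else none

/-- A discrete memoryless channel from `A` to `B`: a conditional pmf. -/
def IsChannel {A B : Type} [Fintype B] (W : A → B → ℝ) : Prop :=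
  (∀ a b, 0 ≤ W a b) ∧ ∀ a, ∑ b, W a b = 1

/-- Joint pmf of an input distribution `q(u,x)` and a channel `W(o|x)`. -/
noncomputable def joint {U X O : Type} (q : U × X → ℝ) (W : X → O → ℝ) :
    U × X × O → ℝ :=
  fun w => q (w.1, w.2.1) * W w.2.1 w.2.2

/-- `Y` is less noisy than `Z` for the channel `W(y,z|x)` : for every auxiliary `U` with
`U → X → (Y,Z)`, i.e. every joint input pmf `q(u,x)`, `I(U;Y) ≥ I(U;Z)`. -/
def LessNoisy {X Y Z : Type} [Fintype X] [Fintype Y] [Fintype Z]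
    (W : X → Y × Z → ℝ) : Prop :=
  ∀ (U : Type) (_ : Fintype U) (q : U × X → ℝ), IsPMF q →
    MI (joint q W) (fun w => w.1) (fun w => w.2.2.2) ≤
    MI (joint q W) (fun w => w.1) (fun w => w.2.2.1)

/-- `Y` is more capable than `Z` for the channel `W(y,z|x)` : `I(X;Y) ≥ I(X;Z)` for
every input pmf `q(x)`. -/
def MoreCapable {X Y Z : Type} [Fintype X] [Fintype Y] [Fintype Z]
    (W : X → Y × Z → ℝ) : Prop :=
  ∀ q : X → ℝ, IsPMF q →
    MI (fun w : X × Y × Z => q w.1 * W w.1 w.2) (fun w => w.1) (fun w => w.2.2) ≤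
    MI (fun w : X × Y × Z => q w.1 * W w.1 w.2) (fun w => w.1) (fun w => w.2.1)

/-- Conditional pmf given an event. -/
noncomputable def condp (p : Ω → ℝ) (s : Ω → Prop) : Ω → ℝ :=
  fun ω => if s ω then p ω / pr p s else 0

/-- Number of occurrences of `v` in the sequence `vs`. -/
noncomputable def Nocc {n : ℕ} {V : Type} (vs : Fin n → V) (v : V) : ℕ :=
  (Finset.univ.filter (fun i => vs i = v)).card

/-- Binary entropy (base 2). -/
noncomputable def binEnt (γ : ℝ) : ℝ := nml γ + nml (1 - γ)

end Secrecy

/-!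
Write `Fᵢ = Y_{i+1}ⁿ`, `Pᵢ = Z^{i-1}`, `Uᵢ = (M₀, Pᵢ)` and `Vᵢ = (Uᵢ, Fᵢ)`. Csiszár's sum identity
`∑ᵢ I(Pᵢ; Yᵢ | T, Fᵢ) = ∑ᵢ I(Fᵢ; Zᵢ | T, Pᵢ)`, used for `T = M₀` and for `T = (M₀, M₁)` together
with the chain rule, turns the left-hand side into `∑ᵢ [I(M₁; Yᵢ | Vᵢ) - I(M₁; Zᵢ | Vᵢ)]`.

Since the channel is memoryless, `(M₀, M₁, Pᵢ, Fᵢ) → Xᵢ → (Yᵢ, Zᵢ)` is a Markov chain through `W`.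
For any such chain `(C, A) → X → (Y, Z)` the chain rule and `I(A;Y|C,X) = 0` give
`I(X;Y|C) - I(X;Z|C) = [I(A;Y|C) - I(A;Z|C)] + [I(X;Y|C,A) - I(X;Z|C,A)]`,
and both brackets are nonnegative because `Y` is less noisy than `Z` under every conditional law.
With `(C, A) = (Vᵢ, M₁)` and then `(C, A) = (Uᵢ, Fᵢ)` this gives
`I(M₁;Yᵢ|Vᵢ) - I(M₁;Zᵢ|Vᵢ) ≤ I(Xᵢ;Yᵢ|Vᵢ) - I(Xᵢ;Zᵢ|Vᵢ) ≤ I(Xᵢ;Yᵢ|Uᵢ) - I(Xᵢ;Zᵢ|Uᵢ)`.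
-/

namespace Secrecy

open Finset

variable {Ω : Type}

section Probability

variable [Fintype Ω] {p : Ω → ℝ}

theorem pr_congr {s t : Ω → Prop} (h : ∀ ω, s ω ↔ t ω) : pr p s = pr p t := by
  simp only [pr, h]

theorem pr_nonneg (hp : ∀ ω, 0 ≤ p ω) (s : Ω → Prop) : 0 ≤ pr p s :=
  sum_nonneg fun ω _ => by split_ifs <;> simp [hp ω]

theorem pr_eq_zero {s : Ω → Prop} (h : ∀ ω, ¬ s ω) : pr p s = 0 :=
  sum_eq_zero fun ω _ => if_neg (h ω)

theorem pr_mono (hp : ∀ ω, 0 ≤ p ω) {s t : Ω → Prop} (h : ∀ ω, s ω → t ω) :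
    pr p s ≤ pr p t :=
  sum_le_sum fun ω _ => by
    by_cases hs : s ω
    · simp [hs, h ω hs]
    · simp only [hs, if_false]; split_ifs <;> simp [hp ω]

theorem pr_eq_sum_pr_and {B : Type} [Fintype B] (s : Ω → Prop) (Y : Ω → B) :
    pr p s = ∑ b, pr p (fun ω => s ω ∧ Y ω = b) := by
  unfold pr
  rw [sum_comm]
  refine sum_congr rfl fun ω _ => ?_
  by_cases hs : s ω <;> simp [hs]

theorem pr_comp {T : Type} [Fintype T] (R : Ω → T) (s : T → Prop) :
    pr p (fun ω => s (R ω)) = ∑ t, if s t then pr p (fun ω => R ω = t) else 0 := by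
  rw [pr_eq_sum_pr_and _ R]
  refine sum_congr rfl fun t _ => ?_
  split_ifs with ht
  · exact pr_congr fun ω => ⟨And.right, fun h => ⟨h ▸ ht, h⟩⟩
  · exact sum_eq_zero fun ω _ => if_neg (by rintro ⟨h, rfl⟩; exact ht h)

theorem sum_pr_eq {T : Type} [Fintype T] (R : Ω → T) :
    ∑ t, pr p (fun ω => R ω = t) = ∑ ω, p ω := by
  simpa [pr] using (pr_eq_sum_pr_and (p := p) (fun _ => True) R).symm

theorem pr_eq_apply (ω₀ : Ω) : pr p (fun ω => ω = ω₀) = p ω₀ := by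
  simp [pr]

theorem pr_condp (t s : Ω → Prop) :
    pr (condp p t) s = pr p (fun ω => s ω ∧ t ω) / pr p t := by
  simp only [pr, condp, sum_div]
  refine sum_congr rfl fun ω _ => ?_
  by_cases hs : s ω <;> by_cases ht : t ω <;> simp [hs, ht]

theorem sum_condp {s : Ω → Prop} (h : pr p s ≠ 0) : ∑ ω, condp p s ω = 1 := by
  have := pr_condp (p := p) s (fun _ => True)
  simp only [true_and, div_self h] at this
  simpa [pr] using this

theorem isPMF_condp (hp : IsPMF p) {s : Ω → Prop} (h : pr p s ≠ 0) : IsPMF (condp p s) := by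
  refine ⟨fun ω => ?_, ?_⟩
  · unfold condp; split_ifs
    exacts [div_nonneg (hp.1 ω) (pr_nonneg hp.1 s), le_rfl]
  · exact sum_condp h

theorem pr_and_eq_mul_pr_condp {A C : Type} (hp : ∀ ω, 0 ≤ p ω) (X : Ω → A) (Z : Ω → C)
    (a : A) (c : C) :
    pr p (fun ω => X ω = a ∧ Z ω = c)
      = pr p (fun ω => Z ω = c) * pr (condp p fun ω => Z ω = c) (fun ω => X ω = a) := by
  rw [pr_condp]
  rcases eq_or_ne (pr p fun ω => Z ω = c) 0 with h | h
  · rw [h, zero_mul]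
    exact le_antisymm (h ▸ pr_mono hp fun ω hω => hω.2) (pr_nonneg hp _)
  · field_simp

end Probability

theorem nml_mul (a b : ℝ) : nml (a * b) = a * nml b + b * nml a := by
  rcases eq_or_ne a 0 with rfl | ha
  · simp [nml]
  rcases eq_or_ne b 0 with rfl | hb
  · simp [nml]
  simp only [nml, Real.logb, Real.log_mul ha hb]
  ring

def SameFibers {A B : Type} (X : Ω → A) (Y : Ω → B) : Prop :=
  ∀ ω ω', X ω = X ω' ↔ Y ω = Y ω'

section Entropy

variable [Fintype Ω] {A B C D : Type} [Fintype A] [Fintype B] [Fintype C] [Fintype D]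
  {p : Ω → ℝ}

theorem H_eq_sum_logb (p : Ω → ℝ) (X : Ω → A) :
    H p X = ∑ ω, -p ω * Real.logb 2 (pr p (fun ω' => X ω' = X ω)) := by
  set L : A → ℝ := fun a => Real.logb 2 (pr p fun ω => X ω = a)
  calc H p X = ∑ a, ∑ ω, if X ω = a then -p ω * L a else 0 := by
        refine sum_congr rfl fun a _ => ?_
        simp only [nml, pr, neg_mul, sum_mul, ← sum_neg_distrib]
        exact sum_congr rfl fun ω _ => by split_ifs <;> simp [L, pr]
    _ = ∑ ω, -p ω * L (X ω) := by
        rw [sum_comm]; simp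

theorem H_congr {X : Ω → A} {Y : Ω → B} (h : SameFibers X Y) : H p X = H p Y := by
  simp only [H_eq_sum_logb, pr_congr fun ω' => h ω' _]

theorem CMI_congr_cond {X : Ω → A} {Y : Ω → B} {Z : Ω → C} {Z' : Ω → D}
    (h : SameFibers Z Z') : CMI p X Y Z = CMI p X Y Z' := by
  unfold CMI
  rw [H_congr (X := fun ω => (X ω, Z ω)) (Y := fun ω => (X ω, Z' ω)),
    H_congr (X := fun ω => (Y ω, Z ω)) (Y := fun ω => (Y ω, Z' ω)),
    H_congr (X := fun ω => (X ω, Y ω, Z ω)) (Y := fun ω => (X ω, Y ω, Z' ω)), H_congr h] <;>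
  intro ω ω' <;> simp [h ω ω']

theorem CMI_add_CMI_comm (p : Ω → ℝ) (X₁ : Ω → A) (X₂ : Ω → B) (Y : Ω → C) (Z : Ω → D) :
    CMI p X₁ Y Z + CMI p X₂ Y (fun ω => (Z ω, X₁ ω))
      = CMI p X₂ Y Z + CMI p X₁ Y (fun ω => (Z ω, X₂ ω)) := by
  unfold CMI
  have e₁ : H p (fun ω => (X₁ ω, Z ω)) = H p (fun ω => (Z ω, X₁ ω)) :=
    H_congr fun _ _ => by simp only [Prod.mk.injEq]; tauto
  have e₂ : H p (fun ω => (X₂ ω, Z ω)) = H p (fun ω => (Z ω, X₂ ω)) :=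
    H_congr fun _ _ => by simp only [Prod.mk.injEq]; tauto
  have e₃ : H p (fun ω => (X₂ ω, Z ω, X₁ ω)) = H p (fun ω => (X₁ ω, Z ω, X₂ ω)) :=
    H_congr fun _ _ => by simp only [Prod.mk.injEq]; tauto
  have e₄ : H p (fun ω => (X₁ ω, Y ω, Z ω)) = H p (fun ω => (Y ω, Z ω, X₁ ω)) :=
    H_congr fun _ _ => by simp only [Prod.mk.injEq]; tauto
  have e₅ : H p (fun ω => (X₂ ω, Y ω, Z ω)) = H p (fun ω => (Y ω, Z ω, X₂ ω)) :=
    H_congr fun _ _ => by simp only [Prod.mk.injEq]; tauto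
  have e₆ : H p (fun ω => (X₂ ω, Y ω, Z ω, X₁ ω)) = H p (fun ω => (X₁ ω, Y ω, Z ω, X₂ ω)) :=
    H_congr fun _ _ => by simp only [Prod.mk.injEq]; tauto
  linarith

theorem CMI_add_CMI_comm' {E : Type} [Fintype E] (p : Ω → ℝ) (X₁ : Ω → A) (X₂ : Ω → B)
    (Y : Ω → C) (T : Ω → D) (F : Ω → E) :
    CMI p X₁ Y (fun ω => (T ω, F ω)) + CMI p X₂ Y (fun ω => ((T ω, X₁ ω), F ω))
      = CMI p X₂ Y (fun ω => (T ω, F ω)) + CMI p X₁ Y (fun ω => ((T ω, X₂ ω), F ω)) := by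
  rw [CMI_congr_cond (Z := fun ω => ((T ω, X₁ ω), F ω)) (Z' := fun ω => ((T ω, F ω), X₁ ω)),
    CMI_congr_cond (Z := fun ω => ((T ω, X₂ ω), F ω)) (Z' := fun ω => ((T ω, F ω), X₂ ω)),
    CMI_add_CMI_comm] <;>
  intro _ _ <;> simp only [Prod.mk.injEq] <;> tauto

theorem H_comp_eq_of_law {Ω' T : Type} [Fintype Ω'] [Fintype T] {p' : Ω' → ℝ}
    {R : Ω → T} {R' : Ω' → T} (hR : ∀ t, pr p (fun ω => R ω = t) = pr p' (fun ω => R' ω = t))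
    (f : T → A) : H p (fun ω => f (R ω)) = H p' (fun ω => f (R' ω)) := by
  refine sum_congr rfl fun a _ => ?_
  rw [pr_comp R (fun t => f t = a), pr_comp R' (fun t => f t = a)]
  simp only [hR]

theorem MI_comp_eq_of_law {Ω' T : Type} [Fintype Ω'] [Fintype T] {p' : Ω' → ℝ}
    {R : Ω → T} {R' : Ω' → T} (hR : ∀ t, pr p (fun ω => R ω = t) = pr p' (fun ω => R' ω = t))
    (f : T → A) (g : T → B) :
    MI p (fun ω => f (R ω)) (fun ω => g (R ω)) = MI p' (fun ω => f (R' ω)) (fun ω => g (R' ω)) := by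
  unfold MI
  rw [H_comp_eq_of_law hR f, H_comp_eq_of_law hR g, H_comp_eq_of_law hR fun t => (f t, g t)]

theorem H_pair_eq_add_sum_condp (hp : ∀ ω, 0 ≤ p ω) (X : Ω → A) (Z : Ω → C) :
    H p (fun ω => (X ω, Z ω))
      = H p Z + ∑ c, pr p (fun ω => Z ω = c) * H (condp p fun ω => Z ω = c) X := by
  unfold H
  rw [Fintype.sum_prod_type, sum_comm, ← sum_add_distrib]
  refine sum_congr rfl fun c _ => ?_
  simp only [Prod.mk.injEq, pr_and_eq_mul_pr_condp hp, nml_mul, sum_add_distrib, ← mul_sum,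
    ← sum_mul]
  rcases eq_or_ne (pr p fun ω => Z ω = c) 0 with h | h
  · simp [h, nml]
  · rw [sum_pr_eq, sum_condp h, one_mul, add_comm]

theorem CMI_eq_sum_condp (hp : ∀ ω, 0 ≤ p ω) (X : Ω → A) (Y : Ω → B) (Z : Ω → C) :
    CMI p X Y Z = ∑ c, pr p (fun ω => Z ω = c) * MI (condp p fun ω => Z ω = c) X Y := by
  have hXY : H p (fun ω => (X ω, Y ω, Z ω)) = H p (fun ω => ((X ω, Y ω), Z ω)) :=
    H_congr fun _ _ => by simp only [Prod.mk.injEq]; tauto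
  unfold CMI MI
  rw [hXY, H_pair_eq_add_sum_condp hp X, H_pair_eq_add_sum_condp hp Y,
    H_pair_eq_add_sum_condp hp fun ω => (X ω, Y ω)]
  simp only [mul_sub, mul_add, sum_sub_distrib, sum_add_distrib]
  ring

theorem MI_eq_zero_of_indep (hp : ∑ ω, p ω = 1) (X : Ω → A) (Y : Ω → B)
    (h : ∀ a b, pr p (fun ω => X ω = a ∧ Y ω = b)
      = pr p (fun ω => X ω = a) * pr p (fun ω => Y ω = b)) :
    MI p X Y = 0 := by
  have hX : ∑ a, pr p (fun ω => X ω = a) = 1 := (sum_pr_eq X).trans hp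
  have hY : ∑ b, pr p (fun ω => Y ω = b) = 1 := (sum_pr_eq Y).trans hp
  have hXY : H p (fun ω => (X ω, Y ω)) = H p X + H p Y := by
    unfold H
    simp only [Fintype.sum_prod_type, Prod.mk.injEq, h, nml_mul, sum_add_distrib, ← mul_sum,
      ← sum_mul, hX, hY, one_mul]
    ring
  unfold MI
  rw [hXY]; ring

theorem CMI_eq_zero_of_markov (hp : IsPMF p) {X : Ω → A} {Y : Ω → B} {Z : Ω → C}
    (h : Markov p X Z Y) : CMI p X Y Z = 0 := by
  rw [CMI_eq_sum_condp hp.1]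
  refine sum_eq_zero fun c _ => ?_
  rcases eq_or_ne (pr p fun ω => Z ω = c) 0 with h0 | h0
  · rw [h0, zero_mul]
  refine mul_eq_zero_of_right _ (MI_eq_zero_of_indep (isPMF_condp hp h0).2 X Y fun a b => ?_)
  have hm := h a c b
  rw [pr_congr (t := fun ω => (X ω = a ∧ Y ω = b) ∧ Z ω = c) fun ω => by tauto,
    pr_congr (t := fun ω => Y ω = b ∧ Z ω = c) fun ω => and_comm] at hm
  rw [pr_condp, pr_condp, pr_condp]
  field_simp
  linear_combination hm

end Entropy

/-- `S → X → O` is a Markov chain whose second step is the channel `V`. -/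
def IsChannelOutput [Fintype Ω] {ST XT OT : Type} (p : Ω → ℝ) (V : XT → OT → ℝ) (S : Ω → ST)
    (X : Ω → XT) (O : Ω → OT) : Prop :=
  ∀ s x o, pr p (fun ω => S ω = s ∧ X ω = x ∧ O ω = o) = pr p (fun ω => S ω = s ∧ X ω = x) * V x o

section Channel

variable [Fintype Ω] {AT CT ST XT OT : Type} {p : Ω → ℝ} {V : XT → OT → ℝ}
  {S : Ω → ST} {X : Ω → XT} {O : Ω → OT}

theorem IsChannelOutput.comp_side [Fintype ST] {ST' : Type} (h : IsChannelOutput p V S X O)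
    (f : ST → ST') :
    IsChannelOutput p V (fun ω => f (S ω)) X O := by
  intro s' x o
  rw [pr_eq_sum_pr_and _ S, pr_eq_sum_pr_and (fun ω => f (S ω) = s' ∧ X ω = x) S, sum_mul]
  refine sum_congr rfl fun s _ => ?_
  by_cases hs : f s = s'
  · have e₁ : pr p (fun ω => (f (S ω) = s' ∧ X ω = x ∧ O ω = o) ∧ S ω = s)
        = pr p (fun ω => S ω = s ∧ X ω = x ∧ O ω = o) := pr_congr fun ω => by aesop
    have e₂ : pr p (fun ω => (f (S ω) = s' ∧ X ω = x) ∧ S ω = s)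
        = pr p (fun ω => S ω = s ∧ X ω = x) := pr_congr fun ω => by aesop
    rw [e₁, e₂, h]
  · rw [pr_eq_zero, pr_eq_zero, zero_mul] <;> rintro ω ⟨⟨h₁, -⟩, rfl⟩ <;> exact hs h₁

theorem IsChannelOutput.map [Fintype OT] {OT' : Type} (h : IsChannelOutput p V S X O)
    (f : OT → OT') :
    IsChannelOutput p (fun x o' => ∑ o, if f o = o' then V x o else 0) S X
      (fun ω => f (O ω)) := by
  intro s x o'
  rw [pr_eq_sum_pr_and _ O, mul_sum]
  refine sum_congr rfl fun o _ => ?_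
  by_cases ho : f o = o'
  · rw [if_pos ho, ← h]
    exact pr_congr fun ω => by aesop
  · rw [if_neg ho, mul_zero, pr_eq_zero]
    rintro ω ⟨⟨-, -, h₁⟩, rfl⟩
    exact ho h₁

theorem IsChannelOutput.prod_input (h : IsChannelOutput p V S X O) :
    IsChannelOutput p V (fun ω => (S ω, X ω)) X O := by
  rintro ⟨s, x'⟩ x o
  by_cases hx : x' = x
  · subst hx
    have e₁ : pr p (fun ω => (S ω, X ω) = (s, x') ∧ X ω = x' ∧ O ω = o)
        = pr p (fun ω => S ω = s ∧ X ω = x' ∧ O ω = o) := pr_congr fun ω => by aesop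
    have e₂ : pr p (fun ω => (S ω, X ω) = (s, x') ∧ X ω = x')
        = pr p (fun ω => S ω = s ∧ X ω = x') := pr_congr fun ω => by aesop
    rw [e₁, e₂, h]
  · rw [pr_eq_zero (by aesop), pr_eq_zero (by aesop), zero_mul]

theorem IsChannelOutput.condp {C : Ω → CT} {A : Ω → AT}
    (h : IsChannelOutput p V (fun ω => (C ω, A ω)) X O) (c : CT) :
    IsChannelOutput (condp p fun ω => C ω = c) V A X O := by
  intro a x o
  have e₁ : pr p (fun ω => (A ω = a ∧ X ω = x ∧ O ω = o) ∧ C ω = c)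
      = pr p (fun ω => (C ω, A ω) = (c, a) ∧ X ω = x ∧ O ω = o) := pr_congr fun ω => by aesop
  have e₂ : pr p (fun ω => (A ω = a ∧ X ω = x) ∧ C ω = c)
      = pr p (fun ω => (C ω, A ω) = (c, a) ∧ X ω = x) := pr_congr fun ω => by aesop
  rw [pr_condp, pr_condp, e₁, e₂, h, div_mul_eq_mul_div]

theorem IsChannelOutput.markov [Fintype AT] [Fintype CT] {C : Ω → CT} {A : Ω → AT}
    (h : IsChannelOutput p V (fun ω => (C ω, A ω)) X O) :
    Markov p A (fun ω => (C ω, X ω)) O := by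
  rintro a ⟨c, x⟩ o
  have e₁ : pr p (fun ω => A ω = a ∧ (C ω, X ω) = (c, x) ∧ O ω = o)
      = pr p (fun ω => (C ω, A ω) = (c, a) ∧ X ω = x ∧ O ω = o) := pr_congr fun ω => by aesop
  have e₂ : pr p (fun ω => A ω = a ∧ (C ω, X ω) = (c, x))
      = pr p (fun ω => (C ω, A ω) = (c, a) ∧ X ω = x) := pr_congr fun ω => by aesop
  have e₃ : pr p (fun ω => (C ω, X ω) = (c, x) ∧ O ω = o)
      = pr p (fun ω => C ω = c ∧ X ω = x ∧ O ω = o) := pr_congr fun ω => by aesop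
  have e₄ : pr p (fun ω => (C ω, X ω) = (c, x)) = pr p (fun ω => C ω = c ∧ X ω = x) :=
    pr_congr fun ω => by aesop
  rw [e₁, e₂, e₃, e₄, h, h.comp_side Prod.fst]
  ring

end Channel

section LessNoisy

variable [Fintype Ω] {AT CT XT YT ZT : Type} [Fintype AT] [Fintype CT] [Fintype XT] [Fintype YT]
  [Fintype ZT] {p : Ω → ℝ} {C : Ω → CT} {A : Ω → AT} {X : Ω → XT} {Y : Ω → YT} {Z : Ω → ZT}

theorem CMI_add_CMI_eq_of_isChannelOutput {V : XT → YT → ℝ} (hp : IsPMF p)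
    (h : IsChannelOutput p V (fun ω => (C ω, A ω)) X Y) :
    CMI p A Y C + CMI p X Y (fun ω => (C ω, A ω)) = CMI p X Y C := by
  rw [CMI_add_CMI_comm, CMI_eq_zero_of_markov hp h.markov, add_zero]

theorem MI_le_of_lessNoisy {W : XT → YT × ZT → ℝ} (hp : IsPMF p) (hW : LessNoisy W)
    (h : IsChannelOutput p W A X fun ω => (Y ω, Z ω)) :
    MI p A Z ≤ MI p A Y := by
  set q : AT × XT → ℝ := fun ax => pr p fun ω => A ω = ax.1 ∧ X ω = ax.2
  have hq : IsPMF q := by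
    refine ⟨fun _ => pr_nonneg hp.1 _, ?_⟩
    simp only [q, Fintype.sum_prod_type, ← pr_eq_sum_pr_and, sum_pr_eq, hp.2]
  have hlaw : ∀ t : AT × XT × YT × ZT,
      pr p (fun ω => (A ω, X ω, Y ω, Z ω) = t) = pr (joint q W) (fun w => w = t) := by
    rintro ⟨a, x, y, z⟩
    rw [pr_eq_apply, joint, ← h]
    exact pr_congr fun ω => by simp only [Prod.mk.injEq]
  calc MI p A Z = MI (joint q W) (fun w => w.1) (fun w => w.2.2.2) :=
        MI_comp_eq_of_law hlaw Prod.fst fun t => t.2.2.2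
    _ ≤ MI (joint q W) (fun w => w.1) (fun w => w.2.2.1) := hW AT inferInstance q hq
    _ = MI p A Y := (MI_comp_eq_of_law hlaw Prod.fst fun t => t.2.2.1).symm

theorem CMI_le_of_lessNoisy {W : XT → YT × ZT → ℝ} (hp : IsPMF p) (hW : LessNoisy W)
    (h : IsChannelOutput p W (fun ω => (C ω, A ω)) X fun ω => (Y ω, Z ω)) :
    CMI p A Z C ≤ CMI p A Y C := by
  rw [CMI_eq_sum_condp hp.1, CMI_eq_sum_condp hp.1]
  refine sum_le_sum fun c _ => ?_
  rcases eq_or_ne (pr p fun ω => C ω = c) 0 with h0 | h0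
  · simp [h0]
  exact mul_le_mul_of_nonneg_left (MI_le_of_lessNoisy (isPMF_condp hp h0) hW (h.condp c))
    (pr_nonneg hp.1 _)

theorem CMI_sub_CMI_le_of_lessNoisy {W : XT → YT × ZT → ℝ} (hp : IsPMF p) (hW : LessNoisy W)
    (h : IsChannelOutput p W (fun ω => (C ω, A ω)) X fun ω => (Y ω, Z ω)) :
    CMI p A Y C - CMI p A Z C ≤ CMI p X Y C - CMI p X Z C := by
  have hY := CMI_add_CMI_eq_of_isChannelOutput (Y := Y) hp (h.map Prod.fst)
  have hZ := CMI_add_CMI_eq_of_isChannelOutput (Y := Z) hp (h.map Prod.snd)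
  have := CMI_le_of_lessNoisy hp hW h.prod_input
  linarith

theorem CMI_sub_CMI_cond_le_of_lessNoisy {W : XT → YT × ZT → ℝ} (hp : IsPMF p)
    (hW : LessNoisy W) (h : IsChannelOutput p W (fun ω => (C ω, A ω)) X fun ω => (Y ω, Z ω)) :
    CMI p X Y (fun ω => (C ω, A ω)) - CMI p X Z (fun ω => (C ω, A ω))
      ≤ CMI p X Y C - CMI p X Z C := by
  have hY := CMI_add_CMI_eq_of_isChannelOutput (Y := Y) hp (h.map Prod.fst)
  have hZ := CMI_add_CMI_eq_of_isChannelOutput (Y := Z) hp (h.map Prod.snd)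
  have := CMI_le_of_lessNoisy hp hW h
  linarith

end LessNoisy

section Memoryless

variable [Fintype Ω] {ι MT XT OT : Type} [Fintype ι] [Fintype MT] [Fintype XT] [Fintype OT]
  {p : Ω → ℝ} {V : XT → OT → ℝ} {M : Ω → MT} {Xn : Ω → ι → XT} {On : Ω → ι → OT}

theorem sum_ite_and_apply_eq_mul (κ : ι → OT → ℝ) (i : ι) (hκ : ∑ o, κ i o = 1)
    (E : (ι → OT) → Prop) (hE : ∀ os os', (∀ j, j ≠ i → os j = os' j) → (E os ↔ E os'))
    (o : OT) :
    ∑ os, (if E os ∧ os i = o then ∏ j, κ j (os j) else 0)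
      = κ i o * ∑ os, if E os then ∏ j, κ j (os j) else 0 := by
  set e := (Equiv.piSplitAt i fun _ : ι => OT).symm
  have he_i : ∀ c r, e (c, r) i = c := fun c r => by simp [e, Equiv.piSplitAt_symm_apply]
  have he_ne : ∀ c r (j : {j // j ≠ i}), e (c, r) j = r j := fun c r j => by
    simp [e, Equiv.piSplitAt_symm_apply, j.2]
  have hprod : ∀ c r, ∏ j, κ j (e (c, r) j) = κ i c * ∏ j : {j // j ≠ i}, κ j (r j) := by
    intro c r; rw [Fintype.prod_eq_mul_prod_subtype_ne _ i, he_i]; simp only [he_ne]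
  have hEe : ∀ c r, E (e (c, r)) ↔ E (e (o, r)) := fun c r =>
    hE _ _ fun j hj => by rw [he_ne c r ⟨j, hj⟩, he_ne o r ⟨j, hj⟩]
  rw [← e.sum_comp, ← e.sum_comp, Fintype.sum_prod_type, Fintype.sum_prod_type]
  simp only [he_i, hprod]
  simp only [hEe _ _]
  rw [sum_eq_single o (fun c _ hc => by simp [hc]) (by simp)]
  simp_rw [and_true, ← mul_ite_zero, ← mul_sum, ← sum_mul, hκ, one_mul]

def IsMemorylessOutput (p : Ω → ℝ) (V : XT → OT → ℝ) (M : Ω → MT) (Xn : Ω → ι → XT)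
    (On : Ω → ι → OT) : Prop :=
  ∀ m xs os, pr p (fun ω => M ω = m ∧ Xn ω = xs ∧ On ω = os)
    = pr p (fun ω => M ω = m ∧ Xn ω = xs) * ∏ j, V (xs j) (os j)

theorem IsMemorylessOutput.pr_eq_sum (h : IsMemorylessOutput p V M Xn On)
    (E : MT → (ι → XT) → (ι → OT) → Prop) :
    pr p (fun ω => E (M ω) (Xn ω) (On ω))
      = ∑ m, ∑ xs, pr p (fun ω => M ω = m ∧ Xn ω = xs)
          * ∑ os, if E m xs os then ∏ j, V (xs j) (os j) else 0 := by
  rw [pr_comp (fun ω => (M ω, Xn ω, On ω)) fun t => E t.1 t.2.1 t.2.2]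
  simp only [Fintype.sum_prod_type, mul_sum, mul_ite_zero]
  refine sum_congr rfl fun m _ => sum_congr rfl fun xs _ => sum_congr rfl fun os _ => ?_
  rw [← h]
  exact if_congr Iff.rfl (pr_congr fun ω => by simp only [Prod.mk.injEq]) rfl

theorem IsMemorylessOutput.isChannelOutput (h : IsMemorylessOutput p V M Xn On)
    (hV : IsChannel V) (i : ι) {ST : Type} (G : MT → (ι → OT) → ST)
    (hG : ∀ m os os', (∀ j, j ≠ i → os j = os' j) → G m os = G m os') :
    IsChannelOutput p V (fun ω => G (M ω) (On ω)) (fun ω => Xn ω i) (fun ω => On ω i) := by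
  intro s x o
  rw [h.pr_eq_sum fun m xs os => G m os = s ∧ xs i = x ∧ os i = o,
    h.pr_eq_sum fun m xs os => G m os = s ∧ xs i = x, sum_mul]
  refine sum_congr rfl fun m _ => ?_
  rw [sum_mul]
  refine sum_congr rfl fun xs _ => ?_
  by_cases hx : xs i = x
  · subst hx
    simp only [true_and, and_true]
    rw [sum_ite_and_apply_eq_mul (fun j => V (xs j)) i (hV.2 _) (fun os => G m os = s)
      (fun os os' h' => by rw [hG m os os' h'])]
    ring
  · simp [hx]

end Memoryless

section Csiszar

variable {n : ℕ} {A : Type}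

/-- Unlike `future`, indexed by a natural number, so that `k` can run through `0, …, n`. -/
def futureFrom (Y : Ω → Fin n → A) (k : ℕ) : Ω → Fin n → Option A :=
  fun ω j => if k ≤ j then some (Y ω j) else none

def pastBefore (Z : Ω → Fin n → A) (k : ℕ) : Ω → Fin n → Option A :=
  fun ω j => if (j : ℕ) < k then some (Z ω j) else none

theorem future_eq_futureFrom (Y : Ω → Fin n → A) (i : Fin n) :
    future Y i = futureFrom Y (i + 1) := by
  funext ω j
  simp only [future, futureFrom, Fin.lt_def, Nat.succ_le_iff]

theorem past_eq_pastBefore (Z : Ω → Fin n → A) (i : Fin n) : past Z i = pastBefore Z i := by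
  funext ω j
  simp only [past, pastBefore, Fin.lt_def]

theorem futureFrom_eq_iff (Y : Ω → Fin n → A) (k : ℕ) (ω ω' : Ω) :
    futureFrom Y k ω = futureFrom Y k ω' ↔ ∀ j : Fin n, k ≤ j → Y ω j = Y ω' j := by
  simp only [futureFrom, funext_iff]
  refine forall_congr' fun j => ?_
  split_ifs <;> simp [*]

theorem pastBefore_eq_iff (Z : Ω → Fin n → A) (k : ℕ) (ω ω' : Ω) :
    pastBefore Z k ω = pastBefore Z k ω' ↔ ∀ j : Fin n, (j : ℕ) < k → Z ω j = Z ω' j := by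
  simp only [pastBefore, funext_iff]
  refine forall_congr' fun j => ?_
  split_ifs <;> simp [*]

theorem futureFrom_eq_iff_and (Y : Ω → Fin n → A) (i : Fin n) (ω ω' : Ω) :
    futureFrom Y i ω = futureFrom Y i ω'
      ↔ Y ω i = Y ω' i ∧ futureFrom Y (i + 1) ω = futureFrom Y (i + 1) ω' := by
  simp only [futureFrom_eq_iff]
  refine ⟨fun h => ⟨h i le_rfl, fun j hj => h j (by omega)⟩, fun ⟨h₀, h⟩ j hj => ?_⟩
  rcases hj.eq_or_lt with hj | hj
  · rwa [← Fin.ext hj]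
  · exact h j hj

theorem pastBefore_succ_eq_iff_and (Z : Ω → Fin n → A) (i : Fin n) (ω ω' : Ω) :
    pastBefore Z (i + 1) ω = pastBefore Z (i + 1) ω'
      ↔ Z ω i = Z ω' i ∧ pastBefore Z i ω = pastBefore Z i ω' := by
  simp only [pastBefore_eq_iff]
  refine ⟨fun h => ⟨h i (by omega), fun j hj => h j (by omega)⟩, fun ⟨h₀, h⟩ j hj => ?_⟩
  rcases (Nat.lt_succ_iff.mp hj).eq_or_lt with hj | hj
  · rwa [Fin.ext hj]
  · exact h j hj

variable [Fintype Ω] {TT YT ZT : Type} [Fintype TT] [Fintype YT] [Fintype ZT]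

theorem CMI_past_sub_CMI_future_eq (p : Ω → ℝ) (T : Ω → TT) (Yn : Ω → Fin n → YT)
    (Zn : Ω → Fin n → ZT) (i : Fin n) :
    CMI p (past Zn i) (fun ω => Yn ω i) (fun ω => (T ω, future Yn i ω))
        - CMI p (future Yn i) (fun ω => Zn ω i) (fun ω => (T ω, past Zn i ω))
      = (H p (fun ω => (T ω, futureFrom Yn i ω)) - H p (fun ω => (T ω, futureFrom Yn (i + 1) ω)))
        + (H p (fun ω => (T ω, pastBefore Zn i ω))
          - H p (fun ω => (T ω, pastBefore Zn (i + 1) ω)))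
        + (H p (fun ω => (T ω, futureFrom Yn (i + 1) ω, pastBefore Zn (i + 1) ω))
          - H p (fun ω => (T ω, futureFrom Yn i ω, pastBefore Zn i ω))) := by
  simp only [future_eq_futureFrom, past_eq_pastBefore, CMI]
  have e₁ : H p (fun ω => (pastBefore Zn i ω, T ω, futureFrom Yn (i + 1) ω))
      = H p (fun ω => (futureFrom Yn (i + 1) ω, T ω, pastBefore Zn i ω)) :=
    H_congr fun _ _ => by simp only [Prod.mk.injEq]; tauto
  have e₂ : H p (fun ω => (Yn ω i, T ω, futureFrom Yn (i + 1) ω))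
      = H p (fun ω => (T ω, futureFrom Yn i ω)) :=
    H_congr fun _ _ => by simp only [Prod.mk.injEq, futureFrom_eq_iff_and]; tauto
  have e₃ : H p (fun ω => (pastBefore Zn i ω, Yn ω i, T ω, futureFrom Yn (i + 1) ω))
      = H p (fun ω => (T ω, futureFrom Yn i ω, pastBefore Zn i ω)) :=
    H_congr fun _ _ => by simp only [Prod.mk.injEq, futureFrom_eq_iff_and]; tauto
  have e₄ : H p (fun ω => (Zn ω i, T ω, pastBefore Zn i ω))
      = H p (fun ω => (T ω, pastBefore Zn (i + 1) ω)) :=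
    H_congr fun _ _ => by simp only [Prod.mk.injEq, pastBefore_succ_eq_iff_and]; tauto
  have e₅ : H p (fun ω => (futureFrom Yn (i + 1) ω, Zn ω i, T ω, pastBefore Zn i ω))
      = H p (fun ω => (T ω, futureFrom Yn (i + 1) ω, pastBefore Zn (i + 1) ω)) :=
    H_congr fun _ _ => by simp only [Prod.mk.injEq, pastBefore_succ_eq_iff_and]; tauto
  rw [e₁, e₂, e₃, e₄, e₅]
  ring

/-- Csiszár's sum identity. -/
theorem sum_CMI_past_eq_sum_CMI_future (p : Ω → ℝ) (T : Ω → TT) (Yn : Ω → Fin n → YT)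
    (Zn : Ω → Fin n → ZT) :
    ∑ i : Fin n, CMI p (past Zn i) (fun ω => Yn ω i) (fun ω => (T ω, future Yn i ω))
      = ∑ i : Fin n, CMI p (future Yn i) (fun ω => Zn ω i) (fun ω => (T ω, past Zn i ω)) := by
  set a : ℕ → ℝ := fun k => H p fun ω => (T ω, futureFrom Yn k ω)
  set b : ℕ → ℝ := fun k => H p fun ω => (T ω, pastBefore Zn k ω)
  set d : ℕ → ℝ := fun k => H p fun ω => (T ω, futureFrom Yn k ω, pastBefore Zn k ω)
  have hd₀ : d 0 = a 0 := H_congr fun _ _ => by simp [pastBefore_eq_iff]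
  have hdn : d n = b n := H_congr fun _ _ => by simp [futureFrom_eq_iff]
  have han : a n = b 0 := H_congr fun _ _ => by simp [futureFrom_eq_iff, pastBefore_eq_iff]
  rw [← sub_eq_zero, ← sum_sub_distrib,
    sum_congr rfl fun i _ => CMI_past_sub_CMI_future_eq p T Yn Zn i, sum_add_distrib,
    sum_add_distrib, Fin.sum_univ_eq_sum_range (fun k => a k - a (k + 1)),
    Fin.sum_univ_eq_sum_range (fun k => b k - b (k + 1)),
    Fin.sum_univ_eq_sum_range (fun k => d (k + 1) - d k), sum_range_sub', sum_range_sub',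
    sum_range_sub]
  linarith

theorem sum_CMI_sub_CMI_eq_sum_cond_past_future {MT : Type} [Fintype MT] (p : Ω → ℝ)
    (T : Ω → TT) (M : Ω → MT) (Yn : Ω → Fin n → YT) (Zn : Ω → Fin n → ZT) :
    ∑ i : Fin n, (CMI p M (fun ω => Yn ω i) (fun ω => (T ω, future Yn i ω))
        - CMI p M (fun ω => Zn ω i) (fun ω => (T ω, past Zn i ω)))
      = ∑ i : Fin n, (CMI p M (fun ω => Yn ω i) (fun ω => ((T ω, past Zn i ω), future Yn i ω))
        - CMI p M (fun ω => Zn ω i) (fun ω => ((T ω, past Zn i ω), future Yn i ω))) := by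
  have hP : ∀ i : Fin n, CMI p M (fun ω => Zn ω i) (fun ω => ((T ω, future Yn i ω), past Zn i ω))
      = CMI p M (fun ω => Zn ω i) (fun ω => ((T ω, past Zn i ω), future Yn i ω)) := fun i =>
    CMI_congr_cond fun _ _ => by simp only [Prod.mk.injEq]; tauto
  have c₁ := sum_CMI_past_eq_sum_CMI_future p T Yn Zn
  have c₂ := sum_CMI_past_eq_sum_CMI_future p (fun ω => (T ω, M ω)) Yn Zn
  rw [← sub_eq_zero, ← sum_sub_distrib]
  calc _ = ∑ i : Fin n,
        ((CMI p (past Zn i) (fun ω => Yn ω i) (fun ω => (T ω, future Yn i ω))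
          - CMI p (future Yn i) (fun ω => Zn ω i) (fun ω => (T ω, past Zn i ω)))
        - (CMI p (past Zn i) (fun ω => Yn ω i) (fun ω => ((T ω, M ω), future Yn i ω))
          - CMI p (future Yn i) (fun ω => Zn ω i) (fun ω => ((T ω, M ω), past Zn i ω)))) :=
        sum_congr rfl fun i _ => by
          linarith [CMI_add_CMI_comm' p M (past Zn i) (fun ω => Yn ω i) T (future Yn i),
            CMI_add_CMI_comm' p M (future Yn i) (fun ω => Zn ω i) T (past Zn i), hP i]
    _ = 0 := by simp only [sum_sub_distrib, c₁, c₂, sub_self]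

end Csiszar

section Coding

variable {n : ℕ} {MT XT YT ZT : Type} {p : Ω → ℝ} {W : XT → YT × ZT → ℝ}
  {Xn : Ω → Fin n → XT} {Yn : Ω → Fin n → YT} {Zn : Ω → Fin n → ZT}

theorem isMemorylessOutput_of_prod [Fintype Ω] {M₀T M₁T : Type} {M₀ : Ω → M₀T} {M₁ : Ω → M₁T}
    (h : ∀ m₀ m₁ xs ys zs,
      pr p (fun ω => M₀ ω = m₀ ∧ M₁ ω = m₁ ∧ Xn ω = xs ∧ Yn ω = ys ∧ Zn ω = zs)
        = pr p (fun ω => M₀ ω = m₀ ∧ M₁ ω = m₁ ∧ Xn ω = xs) * ∏ i, W (xs i) (ys i, zs i)) :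
    IsMemorylessOutput p W (fun ω => (M₀ ω, M₁ ω)) Xn fun ω j => (Yn ω j, Zn ω j) := by
  rintro ⟨m₀, m₁⟩ xs os
  have hos : ∀ ω, (fun j => (Yn ω j, Zn ω j)) = os
      ↔ Yn ω = (fun j => (os j).1) ∧ Zn ω = (fun j => (os j).2) := fun ω => by
    simp only [funext_iff, Prod.ext_iff, forall_and]
  simp only [Prod.mk.injEq, hos, and_assoc]
  exact h m₀ m₁ xs _ _

theorem IsMemorylessOutput.isChannelOutput_past_future [Fintype Ω] [Fintype MT] [Fintype XT]
    [Fintype YT] [Fintype ZT] {M : Ω → MT}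
    (h : IsMemorylessOutput p W M Xn fun ω j => (Yn ω j, Zn ω j)) (hW : IsChannel W)
    (i : Fin n) :
    IsChannelOutput p W (fun ω => (M ω, past Zn i ω, future Yn i ω)) (fun ω => Xn ω i)
      (fun ω => (Yn ω i, Zn ω i)) :=
  h.isChannelOutput hW i
    (fun m os => (m, fun j => if j < i then some (os j).2 else none,
      fun j => if i < j then some (os j).1 else none))
    fun m os os' hos => by
      simp only [Prod.mk.injEq, true_and]
      constructor <;> funext j <;> split_ifs with hj
      exacts [by rw [hos j hj.ne], rfl, by rw [hos j hj.ne'], rfl]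

end Coding

end Secrecy

open Secrecy in
/-- for `n` uses of a memoryless channel `W(y,z|x)` with `Y` less noisy
than `Z`, and `U_i = (M₀, Z^{i-1})`,
`∑ᵢ [I(M₁;Yᵢ|M₀,Y_{i+1}ⁿ) - I(M₁;Zᵢ|M₀,Z^{i-1})] ≤ ∑ᵢ [I(Xᵢ;Yᵢ|Uᵢ) - I(Xᵢ;Zᵢ|Uᵢ)]`. -/
theorem stmt10 {Ω M0T M1T XT YT ZT : Type} [Fintype Ω] [Fintype M0T] [Fintype M1T]
    [Fintype XT] [Fintype YT] [Fintype ZT] {n : ℕ}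
    (p : Ω → ℝ) (hp : IsPMF p)
    (M0 : Ω → M0T) (M1 : Ω → M1T)
    (Xn : Ω → Fin n → XT) (Yn : Ω → Fin n → YT) (Zn : Ω → Fin n → ZT)
    (W : XT → YT × ZT → ℝ) (hW : IsChannel W)
    (hMem : ∀ (m0 : M0T) (m1 : M1T) (xs : Fin n → XT) (ys : Fin n → YT) (zs : Fin n → ZT),
      pr p (fun ω => M0 ω = m0 ∧ M1 ω = m1 ∧ Xn ω = xs ∧ Yn ω = ys ∧ Zn ω = zs)
        = pr p (fun ω => M0 ω = m0 ∧ M1 ω = m1 ∧ Xn ω = xs) * ∏ i, W (xs i) (ys i, zs i))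
    (hLN : LessNoisy W) :
    ∑ i : Fin n,
        (CMI p M1 (fun ω => Yn ω i) (fun ω => (M0 ω, future Yn i ω))
          - CMI p M1 (fun ω => Zn ω i) (fun ω => (M0 ω, past Zn i ω)))
      ≤ ∑ i : Fin n,
        (CMI p (fun ω => Xn ω i) (fun ω => Yn ω i) (fun ω => (M0 ω, past Zn i ω))
          - CMI p (fun ω => Xn ω i) (fun ω => Zn ω i) (fun ω => (M0 ω, past Zn i ω))) := by
  have hOut := (isMemorylessOutput_of_prod hMem).isChannelOutput_past_future hW
  rw [sum_CMI_sub_CMI_eq_sum_cond_past_future p M0 M1 Yn Zn]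
  refine Finset.sum_le_sum fun i _ => ?_
  calc _ ≤ CMI p (fun ω => Xn ω i) (fun ω => Yn ω i) (fun ω => ((M0 ω, past Zn i ω), future Yn i ω))
        - CMI p (fun ω => Xn ω i) (fun ω => Zn ω i)
            (fun ω => ((M0 ω, past Zn i ω), future Yn i ω)) :=
        CMI_sub_CMI_le_of_lessNoisy hp hLN
          ((hOut i).comp_side fun t => (((t.1.1, t.2.1), t.2.2), t.1.2))
    _ ≤ _ := CMI_sub_CMI_cond_le_of_lessNoisy hp hLN
          ((hOut i).comp_side fun t => ((t.1.1, t.2.1), t.2.2))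
end

section
/- For any discrete random variables M_1 (uniform on its range), M_0 independent of M_1, and sequences Y_1^n, Z_2^n with H(M_0 | Z_2^n) ≤ nε_n and H(M_1 | Y_1^n, M_0) ≤ nε_n (Fano conditions), the equivocation satisfies H(M_1 | Z_2^n) ≤ I(M_1; Y_1^n | M_0) - I(M_1; Z_2^n | M_0) + 2nε_n. -/
open scoped BigOperators Classical

section Aux
open Secrecy
variable {Ω : Type} [Fintype Ω]

lemma nml_zero' : nml 0 = 0 := by simp [nml]

lemma nml_add_le' {a b : ℝ} (ha : 0 ≤ a) (hb : 0 ≤ b) :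
    nml (a + b) ≤ nml a + nml b := by
  have key : ∀ x y : ℝ, 0 ≤ x → 0 ≤ y → -x * Real.logb 2 (x + y) ≤ nml x := by
    intro x y hx hy
    rcases eq_or_lt_of_le hx with h | h
    · simp [nml, ← h]
    · have hlog : Real.logb 2 x ≤ Real.logb 2 (x + y) :=
        (Real.logb_le_logb one_lt_two h (by linarith)).mpr (by linarith)
      unfold nml; nlinarith
  have h1 := key a b ha hb
  have h2 := key b a hb ha
  rw [add_comm b a] at h2
  have : nml (a + b) = -a * Real.logb 2 (a + b) + -b * Real.logb 2 (a + b) := by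
    unfold nml; ring
  linarith

lemma nml_sum_le' {ι : Type*} (s : Finset ι) (q : ι → ℝ) (h : ∀ i ∈ s, 0 ≤ q i) :
    nml (∑ i ∈ s, q i) ≤ ∑ i ∈ s, nml (q i) := by
  induction s using Finset.cons_induction with
  | empty => simp [nml]
  | cons a s ha ih =>
    rw [Finset.sum_cons, Finset.sum_cons]
    calc nml (q a + ∑ i ∈ s, q i) ≤ nml (q a) + nml (∑ i ∈ s, q i) :=
          nml_add_le' (h a (Finset.mem_cons_self a s))
            (Finset.sum_nonneg fun i hi => h i (Finset.mem_cons_of_mem hi))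
      _ ≤ nml (q a) + ∑ i ∈ s, nml (q i) := by
          have := ih (fun i hi => h i (Finset.mem_cons_of_mem hi)); linarith

lemma pr_nonneg' {p : Ω → ℝ} (hp0 : ∀ ω, 0 ≤ p ω) (s : Ω → Prop) : 0 ≤ pr p s :=
  Finset.sum_nonneg fun ω _ => by
    split
    · exact hp0 ω
    · exact le_rfl

lemma pr_congr' {p : Ω → ℝ} {s t : Ω → Prop} (h : ∀ ω, s ω ↔ t ω) : pr p s = pr p t :=
  Finset.sum_congr rfl fun ω _ => by simp only [h ω]

lemma pr_fiber' {A B : Type} [Fintype A] (p : Ω → ℝ) (X : Ω → A) (g : A → B) (b : B) :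
    pr p (fun ω => g (X ω) = b) =
      ∑ a ∈ Finset.univ.filter (fun a => g a = b), pr p (fun ω => X ω = a) := by
  unfold pr
  rw [Finset.sum_comm]
  refine Finset.sum_congr rfl fun ω _ => ?_
  rw [Finset.sum_ite_eq]
  simp

lemma pr_sum_one' {A : Type} [Fintype A] {p : Ω → ℝ} (hp : IsPMF p) (X : Ω → A) :
    ∑ a, pr p (fun ω => X ω = a) = 1 := by
  unfold pr
  rw [Finset.sum_comm]
  rw [← hp.2]
  refine Finset.sum_congr rfl fun ω _ => ?_
  rw [Finset.sum_ite_eq]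
  simp

lemma H_comp_le' {A B : Type} [Fintype A] [Fintype B] {p : Ω → ℝ} (hp0 : ∀ ω, 0 ≤ p ω)
    (X : Ω → A) (g : A → B) : H p (fun ω => g (X ω)) ≤ H p X := by
  unfold H
  calc ∑ b, nml (pr p fun ω => g (X ω) = b)
      ≤ ∑ b, ∑ a ∈ Finset.univ.filter (fun a => g a = b), nml (pr p fun ω => X ω = a) := by
        refine Finset.sum_le_sum fun b _ => ?_
        rw [pr_fiber' p X g b]
        exact nml_sum_le' _ _ fun a _ => pr_nonneg' hp0 _
    _ = ∑ a, nml (pr p fun ω => X ω = a) := Finset.sum_fiberwise _ _ _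

lemma H_swap' {A B : Type} [Fintype A] [Fintype B] (p : Ω → ℝ) (X : Ω → A) (Y : Ω → B) :
    H p (fun ω => (X ω, Y ω)) = H p (fun ω => (Y ω, X ω)) := by
  unfold H
  refine Fintype.sum_equiv (Equiv.prodComm A B) _ _ fun ab => ?_
  exact congrArg nml (pr_congr' fun ω => by
    simp [Prod.ext_iff, and_comm])

lemma nml_mul' (a b : ℝ) : nml (a * b) = b * nml a + a * nml b := by
  rcases eq_or_ne a 0 with rfl | ha
  · simp [nml]
  rcases eq_or_ne b 0 with rfl | hb
  · simp [nml]
  unfold nml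
  rw [Real.logb_mul ha hb]
  ring

lemma H_indep' {A B : Type} [Fintype A] [Fintype B] {p : Ω → ℝ} (hp : IsPMF p)
    (X : Ω → A) (Y : Ω → B)
    (h : ∀ a b, pr p (fun ω => X ω = a ∧ Y ω = b)
        = pr p (fun ω => X ω = a) * pr p (fun ω => Y ω = b)) :
    H p (fun ω => (X ω, Y ω)) = H p X + H p Y := by
  unfold H
  rw [Fintype.sum_prod_type]
  have key : ∀ a b, pr p (fun ω => (X ω, Y ω) = (a, b))
      = pr p (fun ω => X ω = a) * pr p (fun ω => Y ω = b) := by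
    intro a b
    rw [pr_congr' (t := fun ω => X ω = a ∧ Y ω = b) fun ω => by simp [Prod.ext_iff]]
    exact h a b
  have hX := pr_sum_one' hp X
  have hY := pr_sum_one' hp Y
  simp_rw [key, nml_mul', Finset.sum_add_distrib, ← Finset.sum_mul, ← Finset.mul_sum, hY, one_mul]
  rw [← Finset.sum_mul, hX, one_mul]

end Aux

open Secrecy in
/-- for `M₁` uniform, `M₀` independent of `M₁`, and the Fano conditions
`H(M₀|Z₂ⁿ) ≤ nεₙ`, `H(M₁|Y₁ⁿ,M₀) ≤ nεₙ`,
`H(M₁|Z₂ⁿ) ≤ I(M₁;Y₁ⁿ|M₀) - I(M₁;Z₂ⁿ|M₀) + 2nεₙ`. -/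
theorem stmt16 {Ω M1T M0T YT ZT : Type} [Fintype Ω] [Fintype M1T] [Fintype M0T]
    [Fintype YT] [Fintype ZT] [Nonempty M1T] {n : ℕ} (εn : ℝ)
    (p : Ω → ℝ) (hp : IsPMF p)
    (M1 : Ω → M1T) (M0 : Ω → M0T) (Y1n : Ω → YT) (Z2n : Ω → ZT)
    (hUnif : ∀ m : M1T, pr p (fun ω => M1 ω = m) = 1 / Fintype.card M1T)
    (hIndep : ∀ (m0 : M0T) (m1 : M1T), pr p (fun ω => M0 ω = m0 ∧ M1 ω = m1)
        = pr p (fun ω => M0 ω = m0) * pr p (fun ω => M1 ω = m1))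
    (hFano0 : Hc p M0 Z2n ≤ (n:ℝ) * εn)
    (hFano1 : Hc p M1 (fun ω => (Y1n ω, M0 ω)) ≤ (n:ℝ) * εn) :
    Hc p M1 Z2n ≤ CMI p M1 Y1n M0 - CMI p M1 Z2n M0 + 2 * (n:ℝ) * εn := by
  have hswapZ : H p (fun ω => (Z2n ω, M0 ω)) = H p (fun ω => (M0 ω, Z2n ω)) :=
    H_swap' p Z2n M0
  have hmono : H p (fun ω => (M1 ω, Z2n ω)) ≤ H p (fun ω => (M1 ω, Z2n ω, M0 ω)) :=
    H_comp_le' hp.1 (fun ω => (M1 ω, Z2n ω, M0 ω)) (fun w => (w.1, w.2.1))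
  simp only [Hc, CMI] at *
  linarith
end
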